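/- arXiv:1711.02842 — 5 statements merged into one kernel-verified Lean document; each statement's English description precedes it below -/
import Mathlib

section
/- Let S be a k-dimensional linear subspace of R^n. Then the number of vertices of the hypercube {-1,1}^n contained in S is at most 2^k. -/
/-!
The coordinate functionals restricted to `S` separate its points, so they span its dual, and
some `k = dim S` of them form a basis of that dual. A vector of `S` is then determined by those
`k` coordinates, and a cube vertex has only two choices for each of them.
-/

open Module

namespace Submodule

variable {ι K : Type*} [Field K] (S : Submodule K (ι → K)) [FiniteDimensional K S]

theorem exists_fin_finrank_injOn_comp :
    ∃ a : Fin (finrank K S) → ι, Set.InjOn (fun x => x ∘ a) (S : Set (ι → K)) := by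
  let φ : ι → Dual K S := fun i => (LinearMap.proj i).comp S.subtype
  have hφ : span K (Set.range φ) = ⊤ := by
    refine span_eq_top_of_ne_zero fun z hz => ?_
    obtain ⟨i, hi⟩ : ∃ i, (z : ι → K) i ≠ 0 := by
      by_contra! h0
      exact hz (Subtype.ext (funext h0))
    exact ⟨φ i, ⟨i, rfl⟩, hi⟩
  obtain ⟨κ, a, -, hspan, hli⟩ := exists_linearIndependent' K φ
  let B : Basis κ K (Dual K S) := Basis.mk hli (by rw [hspan, hφ])
  have hcard : Nat.card κ = finrank K S := by
    rw [← finrank_eq_nat_card_basis B, Subspace.dual_finrank_eq]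
  have : Finite κ := Module.Finite.finite_basis B
  let e : κ ≃ Fin (finrank K S) := (Finite.equivFin κ).trans (finCongr hcard)
  refine ⟨a ∘ e.symm, fun x hx y hy hxy => ?_⟩
  let z : S := ⟨x - y, sub_mem hx hy⟩
  have hz : Dual.eval K S z = 0 := B.ext fun j => by
    simpa [B, φ, z, sub_eq_zero] using congrFun hxy (e j)
  funext i
  simpa [φ, z, sub_eq_zero] using LinearMap.congr_fun hz (φ i)

theorem ncard_pi_inter_le {V : Set K} (hV : V.Finite) :
    (Set.univ.pi (fun _ : ι => V) ∩ S).ncard ≤ V.ncard ^ finrank K S := by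
  obtain ⟨a, ha⟩ := S.exists_fin_finrank_injOn_comp
  have : Finite V := hV
  let f : (Set.univ.pi (fun _ : ι => V) ∩ S : Set (ι → K)) → Fin (finrank K S) → V :=
    fun x j => ⟨x.1 (a j), x.2.1 (a j) trivial⟩
  have hf : f.Injective := fun x y hxy => Subtype.ext <| ha x.2.2 y.2.2 <| funext fun j =>
    congrArg Subtype.val (congrFun hxy j)
  calc (Set.univ.pi (fun _ : ι => V) ∩ S).ncard
      ≤ Nat.card (Fin (finrank K S) → V) := Nat.card_le_card_of_injective f hf
    _ = V.ncard ^ finrank K S := by rw [Nat.card_fun, Nat.card_fin, Nat.card_coe_set_eq]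

end Submodule

/-- (Odlyzko) Any `k`-dimensional linear subspace of `ℝ^n` contains at most `2^k`
vertices of the hypercube `{-1,1}^n`. -/
theorem cube_inter_subspace_card_le (n k : ℕ) (S : Submodule ℝ (Fin n → ℝ))
    (hS : Module.finrank ℝ S = k) :
    {x : Fin n → ℝ | (∀ i, x i = 1 ∨ x i = -1) ∧ x ∈ S}.ncard ≤ 2 ^ k := by
  have hcube : {x : Fin n → ℝ | (∀ i, x i = 1 ∨ x i = -1) ∧ x ∈ S} =
      Set.univ.pi (fun _ => {1, -1}) ∩ S := by
    ext x; simp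
  rw [hcube, ← hS, ← Set.ncard_pair (show (1 : ℝ) ≠ -1 by norm_num)]
  exact S.ncard_pi_inter_le (Set.toFinite _)
end

section
/- Let M be a fixed k×m matrix with entries ±1 of rank r > 0, let c be a fixed integer vector of length k, and let x be a random vector uniformly distributed on {-1,1}^m. Then P(Mx = c) ≤ 2^{-r}. -/
/-!
Pick `rank M` linearly independent columns of `M`. Two solutions of `M x = c` that agree off
those columns differ by a kernel vector supported on them, hence coincide; so a `±1` solution is
determined by its remaining `m - rank M` coordinates.
-/

namespace Matrix

variable {K m n : Type*} [Field K] [Fintype n]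

theorem exists_linearIndepOn_col_card_eq_rank (A : Matrix m n K) :
    ∃ s : Finset n, s.card = A.rank ∧ LinearIndepOn K A.col (s : Set n) := by
  classical
  obtain ⟨b, -, -, hspan, hli⟩ :=
    exists_linearIndepOn_extension (linearIndepOn_empty K A.col) (Set.empty_subset Set.univ)
  refine ⟨b.toFinset, ?_, by simpa using hli⟩
  have hb : Submodule.span K (A.col '' b) = Submodule.span K (Set.range A.col) :=
    le_antisymm (Submodule.span_mono (Set.image_subset_range _ _))
      (Submodule.span_le.2 (by simpa using hspan))
  rw [rank_eq_finrank_span_cols, ← hb, Set.image_eq_range, finrank_span_eq_card hli,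
    Set.toFinset_card]

theorem eq_zero_of_mulVec_eq_zero_of_linearIndepOn {A : Matrix m n K} {s : Finset n}
    (hs : LinearIndepOn K A.col (s : Set n)) {x : n → K} (hx : A *ᵥ x = 0)
    (hxs : ∀ j ∉ s, x j = 0) : x = 0 := by
  have hsum : ∑ j ∈ s, x j • A.col j = 0 := by
    rw [← hx, Finset.sum_subset (Finset.subset_univ s) (fun j _ hj => by simp [hxs j hj])]
    ext i
    simp [mulVec, dotProduct, mul_comm]
  funext j
  by_cases hj : j ∈ s
  · exact linearIndepOn_finset_iff.1 hs x hsum j hj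
  · exact hxs j hj

theorem ncard_setOf_mem_and_mulVec_eq_le (A : Matrix m n K) (T : Finset K) (b : m → K) :
    {x : n → K | (∀ j, x j ∈ T) ∧ A *ᵥ x = b}.ncard ≤ T.card ^ (Fintype.card n - A.rank) := by
  classical
  obtain ⟨s, hcard, hs⟩ := A.exists_linearIndepOn_col_card_eq_rank
  have hinj : Set.InjOn (fun (x : n → K) (j : ↥sᶜ) => x j)
      {x : n → K | (∀ j, x j ∈ T) ∧ A *ᵥ x = b} := by
    intro x hx y hy hxy
    have hdiff := eq_zero_of_mulVec_eq_zero_of_linearIndepOn hs (x := x - y)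
      (by rw [mulVec_sub, hx.2, hy.2, sub_self])
      (fun j hj => sub_eq_zero.2 (congrFun hxy ⟨j, Finset.mem_compl.2 hj⟩))
    exact sub_eq_zero.1 hdiff
  calc _ ≤ (Fintype.piFinset fun _ : ↥sᶜ => T : Set (↥sᶜ → K)).ncard :=
        Set.ncard_le_ncard_of_injOn _ (fun x hx => by simpa using fun j _ => hx.1 j) hinj
          (Finset.finite_toSet _)
    _ = T.card ^ (Fintype.card n - A.rank) := by
        rw [Set.ncard_coe_finset, Fintype.card_piFinset, Finset.prod_const, Finset.card_univ,
          Fintype.card_coe, Finset.card_compl, hcard]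

end Matrix

theorem prob_mulVec_eq_le_general (k m r : ℕ) (M : Matrix (Fin k) (Fin m) ℝ)
    (hr : M.rank = r)
    (c : Fin k → ℤ) :
    {x : Fin m → ℝ | (∀ i, x i = 1 ∨ x i = -1) ∧
        M.mulVec x = fun i => (c i : ℝ)}.ncard * 2 ^ r ≤ 2 ^ m := by
  have hcount := M.ncard_setOf_mem_and_mulVec_eq_le {1, -1} fun i => (c i : ℝ)
  simp only [Finset.mem_insert, Finset.mem_singleton, Fintype.card_fin, hr,
    Finset.card_pair (by norm_num : (1 : ℝ) ≠ -1)] at hcount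
  calc _ ≤ 2 ^ (m - r) * 2 ^ r := Nat.mul_le_mul_right _ hcount
    _ = 2 ^ m := by rw [← pow_add, Nat.sub_add_cancel (hr ▸ M.rank_le_width)]

/-- Let `M` be a fixed `k × m` matrix with entries `±1` of rank `r > 0`, let `c` be a fixed
integer vector, and let `x` be uniform on `{-1,1}^m`. Then `P(Mx = c) ≤ 2^{-r}`,
i.e. the number of `±1` vectors `x` with `Mx = c`, times `2^r`, is at most `2^m`
(the total number of `±1` vectors). -/
theorem prob_mulVec_eq_le (k m r : ℕ) (M : Matrix (Fin k) (Fin m) ℝ)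
    (hM : ∀ i j, M i j = 1 ∨ M i j = -1) (hr : M.rank = r) (hr0 : 0 < r)
    (c : Fin k → ℤ) :
    {x : Fin m → ℝ | (∀ i, x i = 1 ∨ x i = -1) ∧
        M.mulVec x = fun i => (c i : ℝ)}.ncard * 2 ^ r ≤ 2 ^ m :=
  prob_mulVec_eq_le_general k m r M hr c
end

section
/- For any k-dimensional linear subspace S of R^m with k < m, the probability that a uniformly random vector x in {-1,1}^m lies in S is at most 2^{k-m}. -/
/-!
The coordinate functionals restricted to `S` separate its points, so a basis of the span of
them, drawn from among them, has at most `dim S = k` members: `k` coordinates determine a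
vector of `S`. Hence at most `2 ^ k` sign vectors lie in `S`.
-/

open Module

theorem Module.Dual.exists_finset_card_le_finrank_of_separating {K V ι : Type*} [Field K]
    [AddCommGroup V] [Module K V] [FiniteDimensional K V] (f : ι → Dual K V)
    (hf : ∀ v, (∀ i, f i v = 0) → v = 0) :
    ∃ s : Finset ι, s.card ≤ finrank K V ∧ ∀ v, (∀ i ∈ s, f i v = 0) → v = 0 := by
  obtain ⟨κ, a, ha, hspan, hli⟩ := exists_linearIndependent' K f
  have := hli.finite
  have := Fintype.ofFinite κ
  refine ⟨Finset.univ.map ⟨a, ha⟩, ?_, fun v hv => hf v fun i => ?_⟩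
  · simpa [Subspace.dual_finrank_eq] using hli.fintype_card_le_finrank
  · have hi : f i ∈ Submodule.span K (Set.range (f ∘ a)) := hspan ▸ Submodule.subset_span ⟨i, rfl⟩
    have hker : Set.range (f ∘ a) ⊆ LinearMap.ker (Dual.eval K V v) := by
      rintro _ ⟨j, rfl⟩
      exact hv _ (Finset.mem_map_of_mem _ (Finset.mem_univ j))
    exact Submodule.span_le.mpr hker hi

theorem Submodule.exists_finset_card_le_finrank_injOn_restrict {K ι : Type*} [Field K]
    (S : Submodule K (ι → K)) [FiniteDimensional K S] :
    ∃ s : Finset ι, s.card ≤ finrank K S ∧ Set.InjOn (fun x i => x i : (ι → K) → s → K) S := by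
  obtain ⟨s, hcard, hs⟩ := Dual.exists_finset_card_le_finrank_of_separating
    (fun i => (LinearMap.proj i).comp S.subtype) fun v hv => Subtype.ext (funext hv)
  refine ⟨s, hcard, fun x hx y hy hxy => ?_⟩
  have := hs (⟨x, hx⟩ - ⟨y, hy⟩) fun i hi => sub_eq_zero.mpr (congrFun hxy ⟨i, hi⟩)
  simpa [sub_eq_zero] using this

theorem Submodule.ncard_setOf_forall_mem_finset_le {K ι : Type*} [Field K]
    (S : Submodule K (ι → K)) [FiniteDimensional K S] {T : Finset K} (hT : T.Nonempty) :
    {x : ι → K | (∀ i, x i ∈ T) ∧ x ∈ S}.ncard ≤ T.card ^ finrank K S := by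
  obtain ⟨s, hcard, hinj⟩ := S.exists_finset_card_le_finrank_injOn_restrict
  let restrict (x : {x : ι → K | (∀ i, x i ∈ T) ∧ x ∈ S}) : s → T := fun i => ⟨x.1 i, x.2.1 i⟩
  have hrestrict : Function.Injective restrict := fun x y hxy =>
    Subtype.ext <| hinj x.2.2 y.2.2 <| funext fun i => congrArg Subtype.val (congrFun hxy i)
  calc {x : ι → K | (∀ i, x i ∈ T) ∧ x ∈ S}.ncard
      ≤ Nat.card (s → T) := Nat.card_coe_set_eq _ ▸ Nat.card_le_card_of_injective _ hrestrict
    _ = T.card ^ s.card := by simp [Nat.card_fun]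
    _ ≤ T.card ^ finrank K S := Nat.pow_le_pow_right hT.card_pos hcard

theorem prob_cube_mem_subspace_le_general (m k : ℕ) (S : Submodule ℝ (Fin m → ℝ))
    (hS : Module.finrank ℝ S = k) :
    {x : Fin m → ℝ | (∀ i, x i = 1 ∨ x i = -1) ∧ x ∈ S}.ncard * 2 ^ (m - k) ≤ 2 ^ m := by
  have hcount := S.ncard_setOf_forall_mem_finset_le (T := {1, -1}) (by simp)
  rw [Finset.card_pair (by norm_num), hS] at hcount
  have hkm : k ≤ m := by simpa [hS] using S.finrank_le
  calc _ ≤ 2 ^ k * 2 ^ (m - k) := Nat.mul_le_mul_right _ (by simpa using hcount)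
    _ = 2 ^ m := by rw [← pow_add, Nat.add_sub_cancel' hkm]

/-- For a `k`-dimensional subspace `S` of `ℝ^m` with `k < m`, the probability that a uniform
random `±1` vector lies in `S` is at most `2^{k-m}`: equivalently, the number of cube
vertices in `S`, times `2^{m-k}`, is at most `2^m` (the size of the sample space). -/
theorem prob_cube_mem_subspace_le (m k : ℕ) (hk : k < m) (S : Submodule ℝ (Fin m → ℝ))
    (hS : Module.finrank ℝ S = k) :
    {x : Fin m → ℝ | (∀ i, x i = 1 ∨ x i = -1) ∧ x ∈ S}.ncard * 2 ^ (m - k) ≤ 2 ^ m :=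
  prob_cube_mem_subspace_le_general m k S hS
end

section
/- Let M be a 2m × q real matrix. Say M has property P if for every 1 ≤ i ≤ m, deleting both the i-th row and the (m+i)-th row decreases the rank of M by at least one. If M has property P and rank k, then k ≥ m. -/
open Matrix

/-- A `2m × q` matrix (rows indexed by `Fin m ⊕ Fin m`, row `i` and row `m+i` being
`Sum.inl i` and `Sum.inr i`) has property `P` if deleting rows `i` and `m+i` decreases
its rank by at least one, for every `i`. -/
def HasPropertyP {m q : ℕ} (M : Matrix (Fin m ⊕ Fin m) (Fin q) ℝ) : Prop :=
  ∀ i : Fin m,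
    (M.submatrix
        (fun r : {r : Fin m ⊕ Fin m // r ≠ Sum.inl i ∧ r ≠ Sum.inr i} =>
          (r : Fin m ⊕ Fin m)) id).rank + 1 ≤ M.rank

/-! Among the rows of `M` pick a basis of the row space. If no basis row came from the pair
`{i, m+i}`, the remaining rows would still span the row space and deleting the pair would not
lower the rank. So the basis meets each of the `m` pairwise disjoint pairs, and `k ≥ m`. -/

open Module Submodule Set Function

theorem card_le_finrank_span_of_pairwise_disjoint {K V ι J : Type*} [DivisionRing K]
    [AddCommGroup V] [Module K V] [Finite ι] (v : ι → V) (S : J → Set ι)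
    (hS : Pairwise (Disjoint on S)) (hspan : ∀ j, span K (v '' (S j)ᶜ) ≠ span K (range v)) :
    Nat.card J ≤ finrank K (span K (range v)) := by
  obtain ⟨κ, a, ha, hsp, hli⟩ := exists_linearIndependent' K v
  have : Finite κ := .of_injective a ha
  have := Fintype.ofFinite κ
  have hmeets : ∀ j, ∃ c, a c ∈ S j := by
    intro j
    by_contra! hout
    refine hspan j (le_antisymm (span_mono (image_subset_range _ _)) ?_)
    rw [← hsp]
    exact span_mono (range_subset_iff.2 fun c => ⟨a c, hout c, rfl⟩)
  choose f hf using hmeets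
  have hf_inj : Injective f := fun j j' h =>
    hS.eq (not_disjoint_iff.2 ⟨a (f j), hf j, h ▸ hf j'⟩)
  rw [← hsp, finrank_span_eq_card hli, ← Nat.card_eq_fintype_card]
  exact Nat.card_le_card_of_injective f hf_inj

theorem rank_submatrix_subtype_eq_finrank_span {K ι n : Type*} [Field K] [Fintype n] [Finite ι]
    (M : Matrix ι n K) (p : ι → Prop) :
    (M.submatrix (fun r : {r // p r} => (r : ι)) id).rank =
      finrank K (span K (M.row '' {r | p r})) := by
  rw [rank_eq_finrank_span_row, image_eq_range]
  rfl

theorem pairwise_disjoint_inl_inr (m : ℕ) :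
    Pairwise (Disjoint on fun i : Fin m => ({.inl i, .inr i} : Set (Fin m ⊕ Fin m))) := by
  intro i j hij
  simp [onFun, hij.symm]

theorem propertyP_rank_ge_general (m q k : ℕ) (M : Matrix (Fin m ⊕ Fin m) (Fin q) ℝ)
    (hP : HasPropertyP M) (hk : M.rank = k) : m ≤ k := by
  have hspan (i : Fin m) : span ℝ (M.row '' {.inl i, .inr i}ᶜ) ≠ span ℝ (range M.row) := by
    intro h
    have hlt := hP i
    have hpair : {r | r ≠ .inl i ∧ r ≠ .inr i} = ({.inl i, .inr i} : Set (Fin m ⊕ Fin m))ᶜ := by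
      ext; simp
    rw [rank_submatrix_subtype_eq_finrank_span, hpair, h, rank_eq_finrank_span_row] at hlt
    omega
  simpa [← hk, rank_eq_finrank_span_row] using
    card_le_finrank_span_of_pairwise_disjoint M.row _ (pairwise_disjoint_inl_inr m) hspan

/-- If a `2m × q` matrix has property `P` and rank `k`, then `k ≥ m`. -/
theorem propertyP_rank_ge (m q k : ℕ) (hm : 1 ≤ m) (M : Matrix (Fin m ⊕ Fin m) (Fin q) ℝ)
    (hP : HasPropertyP M) (hk : M.rank = k) : m ≤ k :=
  propertyP_rank_ge_general m q k M hP hk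
end

section
/- Let M be a 2m × q matrix of rank k with property P. Then there is a permutation of the rows of M, obtained by composing operations of the two types (swap rows i and m+i; or swap rows i,j and simultaneously rows m+i, m+j for i,j ≤ m), after which the first k rows of the resulting matrix are linearly independent, and the resulting matrix still has property P. -/
/-!
Choose rows indexed by `I` forming a basis of the row space, so `#I = k`. Property `P` forces `I`
to meet every pair `{i, m+i}`: otherwise the rows left after deleting that pair still contain `I`
and span the whole row space. Hence `k = m + t`, where `t` is the number of pairs contained in `I`.
Permuting the pairs so that these `t` pairs come first, and then swapping `i ↔ m+i` in every pair
whose first row is not in `I`, puts the first `k` rows inside `I`. Every composition of allowed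
moves permutes the pairs, and so preserves `P`.
-/

open Matrix

/-- The allowed row operations: swap rows `i ↔ m+i`, or simultaneously swap rows
`i ↔ j` and `m+i ↔ m+j`. -/
def AllowedSwaps (m : ℕ) : Set (Equiv.Perm (Fin m ⊕ Fin m)) :=
  {σ | ∃ i : Fin m, σ = Equiv.swap (Sum.inl i) (Sum.inr i)} ∪
    {σ | ∃ i j : Fin m, i ≠ j ∧
      σ = (Equiv.swap (Sum.inl i) (Sum.inl j)).trans (Equiv.swap (Sum.inr i) (Sum.inr j))}

section RowSpace

variable {K ι n : Type*} [Field K] [Fintype n]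

theorem Matrix.rank_submatrix_equiv_id {κ : Type*} (A : Matrix ι n K) (e : κ ≃ ι) :
    (A.submatrix e id).rank = A.rank :=
  A.rank_submatrix e (Equiv.refl n)

theorem Matrix.rank_submatrix_subtype_val [Finite ι] (A : Matrix ι n K) (p : ι → Prop) :
    (A.submatrix (Subtype.val : {r // p r} → ι) id).rank =
      Module.finrank K (Submodule.span K (A '' {r | p r})) := by
  rw [rank_eq_finrank_span_row, Set.image_eq_range (A : ι → n → K)]
  rfl

theorem Matrix.exists_linearIndepOn_span_rows [Fintype ι] (A : Matrix ι n K) :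
    ∃ I : Finset ι, LinearIndepOn K A I ∧
      Submodule.span K (A '' I) = Submodule.span K (Set.range A) ∧ I.card = A.rank := by
  classical
  obtain ⟨b, -, -, hspan, hb⟩ :=
    exists_linearIndepOn_extension (linearIndepOn_empty K A) (Set.empty_subset Set.univ)
  have hspan' : Submodule.span K (A '' b) = Submodule.span K (Set.range A) :=
    le_antisymm (Submodule.span_mono (Set.image_subset_range _ _))
      (Set.image_univ (f := A) ▸ Submodule.span_le.2 hspan)
  refine ⟨b.toFinset, by simpa using hb, by simpa using hspan', ?_⟩
  rw [rank_eq_finrank_span_row, Matrix.row, ← hspan', Set.image_eq_range (A : ι → n → K),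
    finrank_span_eq_card hb, Set.toFinset_card]

end RowSpace

theorem LinearIndepOn.linearIndependent_comp {R M ι ι' : Type*} [Semiring R] [AddCommMonoid M]
    [Module R M] {v : ι → M} {s : Set ι} (h : LinearIndepOn R v s) {f : ι' → ι}
    (hf : Function.Injective f) (hfs : ∀ x, f x ∈ s) : LinearIndependent R (v ∘ f) :=
  h.comp (Set.codRestrict f s hfs) (hf.codRestrict hfs)

theorem Finset.card_add_card_toLeft_inter_toRight {α : Type*} [Fintype α] [DecidableEq α]
    (I : Finset (α ⊕ α)) (hI : ∀ a, Sum.inl a ∈ I ∨ Sum.inr a ∈ I) :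
    Fintype.card α + (I.toLeft ∩ I.toRight).card = I.card := by
  have hunion : I.toLeft ∪ I.toRight = Finset.univ := by
    ext a
    simpa using hI a
  rw [← card_toLeft_add_card_toRight, ← card_union_add_card_inter, hunion, card_univ]

section Pairs

variable {α : Type*}

def pairIndex : α ⊕ α → α := Sum.elim id id

@[simp] theorem pairIndex_inl (a : α) : pairIndex (Sum.inl a : α ⊕ α) = a := rfl

@[simp] theorem pairIndex_inr (a : α) : pairIndex (Sum.inr a : α ⊕ α) = a := rfl

@[simp] theorem pairIndex_swap (r : α ⊕ α) : pairIndex r.swap = pairIndex r := by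
  cases r <;> rfl

theorem pairIndex_ne_iff {r : α ⊕ α} {a : α} :
    pairIndex r ≠ a ↔ r ≠ Sum.inl a ∧ r ≠ Sum.inr a := by
  cases r <;> simp

def hyperoctahedralGroup (α : Type*) : Subgroup (Equiv.Perm (α ⊕ α)) where
  carrier := {σ | ∃ π : Equiv.Perm α, ∀ r, pairIndex (σ r) = π (pairIndex r)}
  one_mem' := ⟨1, fun _ => rfl⟩
  mul_mem' := by
    rintro σ τ ⟨π, hπ⟩ ⟨π', hπ'⟩
    exact ⟨π * π', fun r => by simp only [Equiv.Perm.mul_apply, hπ, hπ']⟩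
  inv_mem' := by
    rintro σ ⟨π, hπ⟩
    refine ⟨π⁻¹, fun r => ?_⟩
    rw [Equiv.Perm.eq_inv_iff_eq, ← hπ]
    simp

theorem swap_inl_inr_mem_hyperoctahedralGroup [DecidableEq α] (a : α) :
    Equiv.swap (Sum.inl a) (Sum.inr a) ∈ hyperoctahedralGroup α := by
  refine ⟨1, fun r => ?_⟩
  rcases r with b | b <;> rcases eq_or_ne b a with rfl | hb <;>
    simp [Equiv.swap_apply_of_ne_of_ne, *]

theorem sumCongr_mem_hyperoctahedralGroup (ρ : Equiv.Perm α) :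
    Equiv.sumCongr ρ ρ ∈ hyperoctahedralGroup α :=
  ⟨ρ, fun r => by cases r <;> rfl⟩

theorem sumCongr_swap_swap [DecidableEq α] (a b : α) :
    Equiv.sumCongr (Equiv.swap a b) (Equiv.swap a b) =
      (Equiv.swap (Sum.inl a) (Sum.inl b)).trans (Equiv.swap (Sum.inr a) (Sum.inr b)) := by
  ext r
  rcases r with c | c <;> simp [Equiv.swap_apply_def] <;> split_ifs <;> simp_all

def pairFlip [DecidableEq α] (F : Finset α) : Equiv.Perm (α ⊕ α) :=
  Function.Involutive.toPerm (fun r => if pairIndex r ∈ F then r.swap else r) fun r => by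
    by_cases h : pairIndex r ∈ F <;> simp [h]

@[simp] theorem pairFlip_inl [DecidableEq α] (F : Finset α) (a : α) :
    pairFlip F (Sum.inl a) = if a ∈ F then Sum.inr a else Sum.inl a :=
  rfl

@[simp] theorem pairFlip_inr [DecidableEq α] (F : Finset α) (a : α) :
    pairFlip F (Sum.inr a) = if a ∈ F then Sum.inl a else Sum.inr a :=
  rfl

theorem pairFlip_insert [DecidableEq α] {F : Finset α} {a : α} (ha : a ∉ F) :
    pairFlip (insert a F) = Equiv.swap (Sum.inl a) (Sum.inr a) * pairFlip F := by
  ext r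
  rcases r with b | b <;> rcases eq_or_ne b a with rfl | hb <;>
    by_cases hbF : b ∈ F <;> simp [Equiv.swap_apply_of_ne_of_ne, *]

end Pairs

section AllowedSwaps

variable {m : ℕ}

theorem closure_allowedSwaps_le :
    Subgroup.closure (AllowedSwaps m) ≤ hyperoctahedralGroup (Fin m) := by
  rw [Subgroup.closure_le]
  rintro σ (⟨a, rfl⟩ | ⟨a, b, -, rfl⟩)
  · exact swap_inl_inr_mem_hyperoctahedralGroup a
  · rw [← sumCongr_swap_swap]
    exact sumCongr_mem_hyperoctahedralGroup _

theorem pairFlip_mem_closure_allowedSwaps (F : Finset (Fin m)) :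
    pairFlip F ∈ Subgroup.closure (AllowedSwaps m) := by
  induction F using Finset.induction_on with
  | empty =>
    convert one_mem (Subgroup.closure (AllowedSwaps m))
    ext r
    cases r <;> simp
  | insert a F ha ih =>
    rw [pairFlip_insert ha]
    exact mul_mem (Subgroup.subset_closure (Or.inl ⟨a, rfl⟩)) ih

theorem sumCongr_mem_closure_allowedSwaps (ρ : Equiv.Perm (Fin m)) :
    Equiv.sumCongr ρ ρ ∈ Subgroup.closure (AllowedSwaps m) := by
  let φ : Equiv.Perm (Fin m) →* Equiv.Perm (Fin m ⊕ Fin m) :=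
    (Equiv.Perm.sumCongrHom _ _).comp ((MonoidHom.id _).prod (MonoidHom.id _))
  have hρ : ρ ∈ Subgroup.closure {τ : Equiv.Perm (Fin m) | τ.IsSwap} := by
    rw [Equiv.Perm.closure_isSwap]
    trivial
  have hφ := Subgroup.mem_map_of_mem φ hρ
  rw [MonoidHom.map_closure] at hφ
  refine Subgroup.closure_mono ?_ hφ
  rintro _ ⟨τ, ⟨a, b, hab, rfl⟩, rfl⟩
  exact Or.inr ⟨a, b, hab, sumCongr_swap_swap a b⟩

end AllowedSwaps

theorem exists_mem_closure_allowedSwaps_forall_lt_card {m : ℕ} (I : Finset (Fin m ⊕ Fin m))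
    (hI : ∀ i, Sum.inl i ∈ I ∨ Sum.inr i ∈ I) :
    ∃ σ ∈ Subgroup.closure (AllowedSwaps m),
      ∀ r : Fin (m + m), (r : ℕ) < I.card → σ (finSumFinEquiv.symm r) ∈ I := by
  classical
  set S := I.toLeft ∩ I.toRight
  have hcard : m + S.card = I.card := by
    simpa using I.card_add_card_toLeft_inter_toRight hI
  have hSm : S.card ≤ m := by simpa using S.card_le_univ
  let ρ : Equiv.Perm (Fin m) :=
    ((Fin.castLEquiv hSm).symm.trans S.equivFin.symm).extendSubtype
  have hρ : ∀ j : Fin m, (j : ℕ) < S.card → ρ j ∈ S := fun j hj =>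
    Equiv.extendSubtype_mem _ j hj
  refine ⟨pairFlip I.toLeftᶜ * Equiv.sumCongr ρ ρ,
    mul_mem (pairFlip_mem_closure_allowedSwaps _) (sumCongr_mem_closure_allowedSwaps ρ), ?_⟩
  intro r hr
  obtain ⟨x, rfl⟩ := finSumFinEquiv.surjective r
  rw [Equiv.symm_apply_apply]
  rcases x with j | j
  · simp only [Equiv.Perm.mul_apply, Equiv.sumCongr_apply, Sum.map_inl, pairFlip_inl,
      Finset.mem_compl, Finset.mem_toLeft]
    split_ifs with h
    exacts [h, (hI _).resolve_left h]
  · rw [finSumFinEquiv_apply_right, Fin.val_natAdd] at hr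
    have hj : ρ j ∈ S := hρ j (by omega)
    simp only [S, Finset.mem_inter, Finset.mem_toLeft, Finset.mem_toRight] at hj
    simp [hj]

theorem HasPropertyP.submatrix {m q : ℕ} {M : Matrix (Fin m ⊕ Fin m) (Fin q) ℝ}
    (hP : HasPropertyP M) {σ : Equiv.Perm (Fin m ⊕ Fin m)}
    (hσ : σ ∈ hyperoctahedralGroup (Fin m)) :
    HasPropertyP (M.submatrix σ id) := by
  obtain ⟨π, hπ⟩ := hσ
  intro i
  let e : {r // r ≠ Sum.inl i ∧ r ≠ Sum.inr i} ≃
      {r // r ≠ Sum.inl (π i) ∧ r ≠ Sum.inr (π i)} :=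
    σ.subtypeEquiv fun r => by simp only [← pairIndex_ne_iff, hπ, π.injective.ne_iff]
  have he : (M.submatrix σ id).submatrix
      (Subtype.val : {r // r ≠ Sum.inl i ∧ r ≠ Sum.inr i} → _) id =
      (M.submatrix Subtype.val id).submatrix e id := rfl
  rw [he, rank_submatrix_equiv_id, rank_submatrix_equiv_id]
  exact hP (π i)

theorem HasPropertyP.inl_mem_or_inr_mem {m q : ℕ} {M : Matrix (Fin m ⊕ Fin m) (Fin q) ℝ}
    (hP : HasPropertyP M) {I : Set (Fin m ⊕ Fin m)}
    (hI : Submodule.span ℝ (M '' I) = Submodule.span ℝ (Set.range M)) (i : Fin m) :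
    Sum.inl i ∈ I ∨ Sum.inr i ∈ I := by
  by_contra! h
  have hsub : I ⊆ {r | r ≠ Sum.inl i ∧ r ≠ Sum.inr i} := fun r hr =>
    ⟨by rintro rfl; exact h.1 hr, by rintro rfl; exact h.2 hr⟩
  have hspan : Submodule.span ℝ (M '' {r | r ≠ Sum.inl i ∧ r ≠ Sum.inr i}) =
      Submodule.span ℝ (Set.range M) :=
    le_antisymm (Submodule.span_mono (Set.image_subset_range _ _))
      (hI ▸ Submodule.span_mono (Set.image_mono hsub))
  have := hP i
  rw [rank_submatrix_subtype_val, hspan, rank_eq_finrank_span_row, Matrix.row] at this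
  omega

/-- If a `2m × q` matrix of rank `k` has property `P`, then some composition of the allowed
row operations turns it into a matrix which still has property `P` and whose first `k` rows
(under the identification `Fin m ⊕ Fin m ≃ Fin (m + m)`) are linearly independent. -/
theorem propertyP_reduce_to_independent_first_rows (m q k : ℕ)
    (M : Matrix (Fin m ⊕ Fin m) (Fin q) ℝ) (hP : HasPropertyP M) (hk : M.rank = k) :
    ∃ σ ∈ Subgroup.closure (AllowedSwaps m),
      HasPropertyP (M.submatrix σ id) ∧
      LinearIndependent ℝ
        (fun r : {r : Fin (m + m) // (r : ℕ) < k} =>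
          (M.submatrix σ id) (finSumFinEquiv.symm r.val)) := by
  obtain ⟨I, hIind, hIspan, hIcard⟩ := M.exists_linearIndepOn_span_rows
  obtain ⟨σ, hσ, hσI⟩ :=
    exists_mem_closure_allowedSwaps_forall_lt_card I (hP.inl_mem_or_inr_mem hIspan)
  refine ⟨σ, hσ, hP.submatrix (closure_allowedSwaps_le hσ), ?_⟩
  exact hIind.linearIndependent_comp
    (σ.injective.comp (finSumFinEquiv.symm.injective.comp Subtype.val_injective))
    fun r => hσI r (by omega)
end
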